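/- arXiv:2505.14136 — 2 statements merged into one kernel-verified Lean document; each statement's English description precedes it below -/
import Mathlib

section
/- (Proposition B.1, parameter bound.) Assume (A1): there is G > 0 such that for all θ ∈ ℝ^p and all data points z = (x, y), z' = (x', y') in ℝ^d × Y, ‖∇_θ L(θ; z) − ∇_θ L(θ; z')‖ ≤ G · ‖x − x'‖. Fix an initialization θ ∈ ℝ^p and step size η > 0. Let D_⋆ = {z₁, …, z_N} and D' = {z'₁, …, z'_M} be nonempty finite datasets with D_⋆ ∩ D' ≠ ∅, and define the one-step gradient descent iterates θ_⋆ = θ − η · (1/N) Σ_{i=1}^N ∇_θ L(θ; z_i) and θ' = θ − η · (1/M) Σ_{j=1}^M ∇_θ L(θ; z'_j). Then ‖θ_⋆ − θ'‖ ≤ η · G · (diam(D_⋆) + diam(D')). -/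
/-!
Both averaged gradients lie within `G * diam` of the gradient at a data point shared by the two
datasets: each per-example gradient does by (A1), and a uniform average of points of a closed
ball stays in that (convex) ball. The triangle inequality through the shared point concludes.
-/

/-- The diameter of a finite dataset `z : Fin N → ℝ^d × Y`: the maximum Euclidean
distance between the input components of two of its elements. -/
noncomputable def inputDiam {d N : ℕ} {Y : Type*} [NeZero N]
    (z : Fin N → EuclideanSpace ℝ (Fin d) × Y) : ℝ :=
  Finset.univ.sup' Finset.univ_nonempty fun p : Fin N × Fin N =>
    dist (z p.1).1 (z p.2).1

lemma norm_avg_sub_le {ι E : Type*} [Fintype ι] [Nonempty ι] [NormedAddCommGroup E]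
    [NormedSpace ℝ E] (f : ι → E) (c : E) {r : ℝ} (h : ∀ i, ‖f i - c‖ ≤ r) :
    ‖(1 / (Fintype.card ι : ℝ)) • ∑ i, f i - c‖ ≤ r := by
  have hcard : (0 : ℝ) < Fintype.card ι := by exact_mod_cast Fintype.card_pos
  have hmem : ∑ i, (1 / (Fintype.card ι : ℝ)) • f i ∈ Metric.closedBall c r :=
    (convex_closedBall c r).sum_mem (fun _ _ => by positivity)
      (by simp [hcard.ne'])
      (fun i _ => by simpa [dist_eq_norm] using h i)
  rwa [← Finset.smul_sum, Metric.mem_closedBall, dist_eq_norm] at hmem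

lemma dist_le_inputDiam {d N : ℕ} {Y : Type*} [NeZero N]
    (z : Fin N → EuclideanSpace ℝ (Fin d) × Y) (i j : Fin N) :
    dist (z i).1 (z j).1 ≤ inputDiam z :=
  Finset.le_sup' (fun q : Fin N × Fin N => dist (z q.1).1 (z q.2).1) (Finset.mem_univ (i, j))

lemma norm_avg_sub_le_mul_inputDiam {d N : ℕ} {Y F : Type*} [NeZero N]
    [NormedAddCommGroup F] [NormedSpace ℝ F]
    (g : EuclideanSpace ℝ (Fin d) × Y → F) {G : ℝ} (hG : 0 ≤ G)
    (hLip : ∀ w w', ‖g w - g w'‖ ≤ G * ‖w.1 - w'.1‖)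
    (z : Fin N → EuclideanSpace ℝ (Fin d) × Y) (i₀ : Fin N) :
    ‖(1 / (N : ℝ)) • ∑ i, g (z i) - g (z i₀)‖ ≤ G * inputDiam z := by
  simpa only [Fintype.card_fin] using norm_avg_sub_le (fun i => g (z i)) (g (z i₀)) fun i =>
    (hLip (z i) (z i₀)).trans <| by
      rw [← dist_eq_norm]
      exact mul_le_mul_of_nonneg_left (dist_le_inputDiam z i i₀) hG

/-- (Proposition B.1, parameter bound.) Under assumption (A1) (the per-example
gradient of the loss is `G`-Lipschitz in the input), if the nonempty finite datasets
`D_⋆` and `D'` intersect, then the one-step gradient descent iterates from a shared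
initialization `θ` with step size `η` satisfy
`‖θ_⋆ - θ'‖ ≤ η * G * (diam D_⋆ + diam D')`. -/
theorem norm_one_step_gd_sub_le
    {p d : ℕ} {Y : Type*}
    (L : EuclideanSpace ℝ (Fin p) → EuclideanSpace ℝ (Fin d) × Y → ℝ)
    (G : ℝ) (hG : 0 < G)
    (hLip : ∀ (θ : EuclideanSpace ℝ (Fin p)) (z z' : EuclideanSpace ℝ (Fin d) × Y),
      ‖gradient (fun t => L t z) θ - gradient (fun t => L t z') θ‖ ≤ G * ‖z.1 - z'.1‖)
    (θ : EuclideanSpace ℝ (Fin p)) (η : ℝ) (hη : 0 < η)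
    {N M : ℕ} [NeZero N] [NeZero M]
    (z : Fin N → EuclideanSpace ℝ (Fin d) × Y)
    (z' : Fin M → EuclideanSpace ℝ (Fin d) × Y)
    (hinter : ∃ i j, z i = z' j)
    (θstar θ' : EuclideanSpace ℝ (Fin p))
    (hθstar : θstar = θ - η • ((1 / (N : ℝ)) • ∑ i, gradient (fun t => L t (z i)) θ))
    (hθ' : θ' = θ - η • ((1 / (M : ℝ)) • ∑ j, gradient (fun t => L t (z' j)) θ)) :
    ‖θstar - θ'‖ ≤ η * G * (inputDiam z + inputDiam z') := by
  obtain ⟨i₀, j₀, hij⟩ := hinter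
  set g := fun w => gradient (fun t => L t w) θ
  set A := (1 / (N : ℝ)) • ∑ i, g (z i)
  set B := (1 / (M : ℝ)) • ∑ j, g (z' j)
  have hA : ‖A - g (z i₀)‖ ≤ G * inputDiam z :=
    norm_avg_sub_le_mul_inputDiam g hG.le (hLip θ) z i₀
  have hB : ‖B - g (z i₀)‖ ≤ G * inputDiam z' := by
    rw [hij]; exact norm_avg_sub_le_mul_inputDiam g hG.le (hLip θ) z' j₀
  have hstep : θstar - θ' = η • (B - A) := by
    rw [hθstar, hθ', smul_sub]; abel
  calc ‖θstar - θ'‖ = η * ‖B - A‖ := by rw [hstep, norm_smul, Real.norm_of_nonneg hη.le]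
    _ ≤ η * (G * inputDiam z' + G * inputDiam z) := by
        gcongr
        exact (norm_sub_le_norm_sub_add_norm_sub B (g (z i₀)) A).trans
          (add_le_add hB (norm_sub_rev A _ ▸ hA))
    _ = η * G * (inputDiam z + inputDiam z') := by ring
end

section
/- (Proposition B.1, output bound.) Assume (A1): there is G > 0 such that for all θ ∈ ℝ^p and all data points z = (x, y), z' = (x', y') in ℝ^d × Y, ‖∇_θ L(θ; z) − ∇_θ L(θ; z')‖ ≤ G · ‖x − x'‖. Assume (A2): the network f : ℝ^d × ℝ^p → ℝ^m is L-Lipschitz in its parameters, i.e., there is L > 0 such that ‖f(x; θ₁) − f(x; θ₂)‖ ≤ L · ‖θ₁ − θ₂‖ for all x ∈ ℝ^d and θ₁, θ₂ ∈ ℝ^p. Fix an initialization θ ∈ ℝ^p, step size η > 0, and a prompt x⋆ ∈ ℝ^d. Let D_⋆ and D' be nonempty finite datasets with D_⋆ ∩ D' ≠ ∅, and let θ_⋆ and θ' be the respective one-step gradient descent iterates from θ on D_⋆ and on D'. Then ‖f(x⋆; θ_⋆) − f(x⋆; θ')‖ ≤ η · L · G · (diam(D_⋆) + diam(D')). -/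
/-- (Proposition B.1, output bound.) Under (A1) (the per-example gradient of the loss
is `G`-Lipschitz in the input) and (A2) (the network `f` is `L`-Lipschitz in its
parameters), if the nonempty finite datasets `D_⋆` and `D'` intersect, then the
network outputs at any prompt `x⋆` under the one-step gradient descent iterates
`θ_⋆` and `θ'` from a shared initialization `θ` with step size `η` satisfy
`‖f(x⋆; θ_⋆) - f(x⋆; θ')‖ ≤ η * L * G * (diam D_⋆ + diam D')`. -/
theorem norm_output_one_step_gd_sub_le
    {p d m : ℕ} {Y : Type*}
    (Lloss : EuclideanSpace ℝ (Fin p) → EuclideanSpace ℝ (Fin d) × Y → ℝ)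
    (G : ℝ) (hG : 0 < G)
    (hA1 : ∀ (θ : EuclideanSpace ℝ (Fin p)) (z z' : EuclideanSpace ℝ (Fin d) × Y),
      ‖gradient (fun t => Lloss t z) θ - gradient (fun t => Lloss t z') θ‖ ≤
        G * ‖z.1 - z'.1‖)
    (f : EuclideanSpace ℝ (Fin d) → EuclideanSpace ℝ (Fin p) → EuclideanSpace ℝ (Fin m))
    (L : ℝ) (hL : 0 < L)
    (hA2 : ∀ (x : EuclideanSpace ℝ (Fin d)) (θ₁ θ₂ : EuclideanSpace ℝ (Fin p)),
      ‖f x θ₁ - f x θ₂‖ ≤ L * ‖θ₁ - θ₂‖)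
    (θ : EuclideanSpace ℝ (Fin p)) (η : ℝ) (hη : 0 < η)
    (xstar : EuclideanSpace ℝ (Fin d))
    {N M : ℕ} [NeZero N] [NeZero M]
    (z : Fin N → EuclideanSpace ℝ (Fin d) × Y)
    (z' : Fin M → EuclideanSpace ℝ (Fin d) × Y)
    (hinter : ∃ i j, z i = z' j)
    (θstar θ' : EuclideanSpace ℝ (Fin p))
    (hθstar : θstar = θ - η • ((1 / (N : ℝ)) • ∑ i, gradient (fun t => Lloss t (z i)) θ))
    (hθ' : θ' = θ - η • ((1 / (M : ℝ)) • ∑ j, gradient (fun t => Lloss t (z' j)) θ)) :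
    ‖f xstar θstar - f xstar θ'‖ ≤ η * L * G * (inputDiam z + inputDiam z') := by

  obtain ⟨i0, j0, hzz⟩ := hinter
  set g : (EuclideanSpace ℝ (Fin d) × Y) → EuclideanSpace ℝ (Fin p) :=
    fun w => gradient (fun t => Lloss t w) θ with hg
  have key : ∀ {K : ℕ} [NeZero K] (w : Fin K → EuclideanSpace ℝ (Fin p))
      (c : EuclideanSpace ℝ (Fin p)) (s : ℝ), (∀ i, ‖w i - c‖ ≤ s) →
      ‖(1 / (K : ℝ)) • ∑ i, w i - c‖ ≤ s := by
    intro K _ w c s h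
    have hK : (K : ℝ) ≠ 0 := Nat.cast_ne_zero.mpr (NeZero.ne K)
    have heq : (1 / (K : ℝ)) • ∑ i, w i - c = (1 / (K : ℝ)) • ∑ i, (w i - c) := by
      rw [Finset.sum_sub_distrib, smul_sub, Finset.sum_const, Finset.card_univ,
        Fintype.card_fin, ← Nat.cast_smul_eq_nsmul ℝ, smul_smul]
      field_simp; rw [one_smul]
    rw [heq, norm_smul]
    have h1 : ‖∑ i, (w i - c)‖ ≤ ∑ i : Fin K, s :=
      (norm_sum_le _ _).trans (Finset.sum_le_sum fun i _ => h i)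
    have h2 : (∑ _i : Fin K, s) = (K : ℝ) * s := by
      rw [Finset.sum_const, Finset.card_univ, Fintype.card_fin, nsmul_eq_mul]
    have hKpos : (0 : ℝ) < (K : ℝ) := by positivity
    rw [Real.norm_eq_abs, abs_of_pos (by positivity : (0:ℝ) < 1 / (K:ℝ))]
    calc (1 / (K : ℝ)) * ‖∑ i, (w i - c)‖ ≤ (1 / (K : ℝ)) * ((K : ℝ) * s) := by
          rw [← h2]; exact mul_le_mul_of_nonneg_left h1 (by positivity)
      _ = s := by field_simp
  have hbound1 : ∀ i, ‖g (z i) - g (z i0)‖ ≤ G * inputDiam z := by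
    intro i
    refine (hA1 θ (z i) (z i0)).trans (mul_le_mul_of_nonneg_left ?_ hG.le)
    rw [← dist_eq_norm]
    exact Finset.le_sup' (fun q : Fin N × Fin N => dist (z q.1).1 (z q.2).1)
      (Finset.mem_univ (i, i0))
  have hbound2 : ∀ j, ‖g (z' j) - g (z' j0)‖ ≤ G * inputDiam z' := by
    intro j
    refine (hA1 θ (z' j) (z' j0)).trans (mul_le_mul_of_nonneg_left ?_ hG.le)
    rw [← dist_eq_norm]
    exact Finset.le_sup' (fun q : Fin M × Fin M => dist (z' q.1).1 (z' q.2).1)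
      (Finset.mem_univ (j, j0))
  set a : EuclideanSpace ℝ (Fin p) := (1 / (N : ℝ)) • ∑ i, g (z i) with ha
  set b : EuclideanSpace ℝ (Fin p) := (1 / (M : ℝ)) • ∑ j, g (z' j) with hb
  have hka : ‖a - g (z i0)‖ ≤ G * inputDiam z := key _ _ _ hbound1
  have hkb : ‖b - g (z' j0)‖ ≤ G * inputDiam z' := key _ _ _ hbound2
  have hab : ‖a - b‖ ≤ G * (inputDiam z + inputDiam z') := by
    have : ‖a - b‖ ≤ ‖a - g (z i0)‖ + ‖g (z' j0) - b‖ := by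
      rw [hzz]; exact norm_sub_le_norm_sub_add_norm_sub a (g (z' j0)) b
    rw [norm_sub_rev (g (z' j0)) b] at this
    nlinarith
  have hθd : θstar - θ' = η • (b - a) := by
    rw [hθstar, hθ']; abel_nf; module
  calc ‖f xstar θstar - f xstar θ'‖ ≤ L * ‖θstar - θ'‖ := hA2 _ _ _
    _ = L * (η * ‖a - b‖) := by
        rw [hθd, norm_smul, Real.norm_eq_abs, abs_of_pos hη, norm_sub_rev]
    _ ≤ L * (η * (G * (inputDiam z + inputDiam z'))) := by
        exact mul_le_mul_of_nonneg_left (mul_le_mul_of_nonneg_left hab hη.le) hL.le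
    _ = η * L * G * (inputDiam z + inputDiam z') := by ring
end
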